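/- A partition λ is a t-core if and only if its t-colored Frobenius partition 𝔊𝔉_t(λ) satisfies: no color appears in both rows, and if the colored entry a_k (value a with color k) appears in a row, then (a−1)_k, (a−2)_k, ..., 1_k, 0_k all appear in the same row. -/

import Mathlib

/-!
Work in the Maya diagram of `λ`: the beads `λₖ - k - 1` and the gaps `j - λ'ⱼ` partition `ℤ`,
the box `(i, j)` exists exactly when `gapⱼ < beadᵢ`, and its hook length is `beadᵢ - gapⱼ`.
Hence `λ` is a `t`-core iff the bead set is stable under `x ↦ x - t`. The nonnegative beads are
the Frobenius entries `aᵢ` and the negative gaps are the `-bⱼ - 1`. Stability under `x ↦ x - t`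
then says: each row is stable under subtracting `t` (for entries `q·t + r` this is the closure
condition on colored entries), and no bead `a < t` is sent to a gap `-b - 1`, i.e.
`a + b + 1 ≠ t`; reducing mod `t` with the row closures, this is the condition that no color
appears in both rows.
-/

open Filter

/-- A partition represented as a weakly decreasing, eventually zero sequence of parts
(0-indexed: `f i` is the (i+1)-st part). -/
def IsPartition (f : ℕ → ℕ) : Prop :=
  Antitone f ∧ ∀ᶠ i in atTop, f i = 0

/-- The size `|λ|` of a partition. -/
noncomputable def psize (f : ℕ → ℕ) : ℕ := ∑' i, f i

/-- The conjugate partition: `conj f j` is the number of parts of `f` exceeding `j`,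
i.e. the (j+1)-st column length. -/
noncomputable def conj (f : ℕ → ℕ) : ℕ → ℕ := fun j => Nat.card {i : ℕ // j < f i}

/-- The Durfee square size: the number of indices `i` with `λ_{i+1} ≥ i+1`. -/
noncomputable def durfee (f : ℕ → ℕ) : ℕ := Nat.card {i : ℕ // i < f i}

/-- Top Frobenius entry `a_{i+1} = λ_{i+1} - (i+1)` (0-indexed). -/
noncomputable def frobA (f : ℕ → ℕ) (i : ℕ) : ℕ := f i - (i + 1)

/-- Bottom Frobenius entry `b_{i+1} = λ'_{i+1} - (i+1)` (0-indexed). -/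
noncomputable def frobB (f : ℕ → ℕ) (i : ℕ) : ℕ := conj f i - (i + 1)

/-- Hook length of the (0-indexed) box `(i,j)` (valid when `j < f i`):
`h = (λ_i - j) + (λ'_j - i) - 1` in 1-indexed terms, which equals
`(λ_i - i) + (λ'_j - j) + 1`. -/
noncomputable def hook (f : ℕ → ℕ) (i j : ℕ) : ℕ :=
  (f i - (j + 1)) + (conj f j - (i + 1)) + 1

/-- A `t`-core partition: no hook length divisible by `t`. -/
def IsTCore (t : ℕ) (f : ℕ → ℕ) : Prop :=
  IsPartition f ∧ ∀ i j, j < f i → ¬ t ∣ hook f i j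

open Set

lemma IsLowerSet.mem_iff_lt_natCard {S : Set ℕ} (hS : IsLowerSet S) (hfin : S.Finite)
    (k : ℕ) : k ∈ S ↔ k < Nat.card S := by
  rcases hS.eq_univ_or_Iio with rfl | ⟨a, rfl⟩
  · exact absurd hfin infinite_univ
  · simp

lemma sub_nsmul_mem_of_forall_sub_mem {α : Type*} [AddGroup α] {S : Set α} {t : α}
    (h : ∀ x ∈ S, x - t ∈ S) {x : α} (hx : x ∈ S) (m : ℕ) : x - m • t ∈ S := by
  induction m with
  | zero => simpa
  | succ m ih => rw [succ_nsmul', sub_add_eq_sub_sub_swap]; exact h _ ih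

lemma Nat.sub_mul_mem_of_forall_sub_mem {A : Set ℕ} {t : ℕ}
    (h : ∀ a ∈ A, t ≤ a → a - t ∈ A) {a : ℕ} (ha : a ∈ A) {m : ℕ} (hm : m * t ≤ a) :
    a - m * t ∈ A := by
  induction m with
  | zero => simpa
  | succ m ih =>
    rw [Nat.succ_mul] at hm ⊢
    rw [← Nat.sub_sub]
    exact h _ (ih (by omega)) (by omega)

lemma Nat.mod_mem_of_forall_sub_mem {A : Set ℕ} {t : ℕ}
    (h : ∀ a ∈ A, t ≤ a → a - t ∈ A) {a : ℕ} (ha : a ∈ A) : a % t ∈ A := by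
  rw [Nat.mod_eq_sub_mul_div, mul_comm]
  exact Nat.sub_mul_mem_of_forall_sub_mem h ha (Nat.div_mul_le_self a t)

section MayaSet

variable {A B : Set ℕ} {t : ℕ}

-- The beads of the Maya diagram whose nonnegative beads are `A` and whose negative gaps are
-- the `Int.negSucc b = -b - 1` with `b ∈ B`.
def mayaSet (A B : Set ℕ) : Set ℤ := Nat.cast '' A ∪ Int.negSucc '' Bᶜ

@[simp]
lemma natCast_mem_mayaSet (n : ℕ) : (n : ℤ) ∈ mayaSet A B ↔ n ∈ A := by
  simp [mayaSet]

@[simp]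
lemma negSucc_mem_mayaSet (n : ℕ) : Int.negSucc n ∈ mayaSet A B ↔ n ∉ B := by
  simp [mayaSet]

lemma forall_sub_mem_mayaSet_iff (ht : 0 < t) :
    (∀ x ∈ mayaSet A B, x - t ∈ mayaSet A B) ↔
      (∀ a ∈ A, ∀ b ∈ B, a % t ≠ t - 1 - b % t) ∧
      (∀ a ∈ A, t ≤ a → a - t ∈ A) ∧ (∀ b ∈ B, t ≤ b → b - t ∈ B) := by
  have sub_of_le {a : ℕ} (h : t ≤ a) : (a : ℤ) - t = ((a - t : ℕ) : ℤ) := by omega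
  have sub_of_lt {a : ℕ} (h : a < t) : (a : ℤ) - t = Int.negSucc (t - 1 - a) := by
    rw [Int.negSucc_eq]; omega
  have negSucc_sub (b : ℕ) : Int.negSucc b - t = Int.negSucc (b + t) := by
    rw [Int.negSucc_eq, Int.negSucc_eq]; omega
  constructor
  · intro h
    have hA : ∀ a ∈ A, t ≤ a → a - t ∈ A := fun a ha hta => by
      simpa [sub_of_le hta] using h a (by simpa)
    have hB : ∀ b ∈ B, t ≤ b → b - t ∈ B := fun b hb htb => by
      by_contra hb'
      have := h _ ((negSucc_mem_mayaSet _).mpr hb')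
      rw [negSucc_sub, Nat.sub_add_cancel htb, negSucc_mem_mayaSet] at this
      exact this hb
    refine ⟨fun a ha b hb hcol => ?_, hA, hB⟩
    -- Reducing both entries mod `t` yields a bead `a % t < t` whose shift is a gap.
    have hbt := Nat.mod_lt b ht
    have := h _ ((natCast_mem_mayaSet _).mpr (Nat.mod_mem_of_forall_sub_mem hA ha))
    rw [sub_of_lt (Nat.mod_lt a ht), negSucc_mem_mayaSet] at this
    exact this (by convert Nat.mod_mem_of_forall_sub_mem hB hb using 1; omega)
  · rintro ⟨hcol, hA, hB⟩ (a | b) hx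
    · simp only [Int.ofNat_eq_natCast, natCast_mem_mayaSet] at hx ⊢
      rcases le_or_gt t a with hta | hat
      · simpa [sub_of_le hta] using hA a hx hta
      · rw [sub_of_lt hat, negSucc_mem_mayaSet]
        intro hb
        exact hcol a hx _ hb (by rw [Nat.mod_eq_of_lt hat, Nat.mod_eq_of_lt (by omega)]; omega)
    · rw [negSucc_mem_mayaSet] at hx
      rw [negSucc_sub, negSucc_mem_mayaSet]
      intro hb
      exact hx (by simpa using hB _ hb (by omega))

lemma forall_lt_div_exists_iff (ht : 0 < t) (A : Set ℕ) :
    (∀ a ∈ A, ∀ c < a / t, ∃ a' ∈ A, a' / t = c ∧ a' % t = a % t) ↔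
      ∀ a ∈ A, t ≤ a → a - t ∈ A := by
  constructor
  · intro h a ha hta
    have hq : 1 ≤ a / t := (Nat.one_le_div_iff ht).mpr hta
    obtain ⟨a', ha', hdm⟩ := h a ha (a / t - 1) (by omega)
    have ha'eq := ((Nat.div_mod_unique ht).mp hdm).1
    have := Nat.mod_add_div a t
    have := Nat.mul_sub_one t (a / t)
    have := Nat.le_mul_of_pos_right t hq
    convert ha' using 1
    omega
  · intro h a ha c hc
    refine ⟨a - (a / t - c) * t, Nat.sub_mul_mem_of_forall_sub_mem h ha ?_, ?_⟩
    · exact (Nat.mul_le_mul_right t (Nat.sub_le _ _)).trans (Nat.div_mul_le_self a t)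
    · rw [Nat.div_mod_unique ht]
      refine ⟨?_, Nat.mod_lt a ht⟩
      have := Nat.mod_add_div a t
      have := Nat.sub_mul (a / t) c t
      have := Nat.mul_le_mul_right t hc.le
      rw [mul_comm t] at *
      omega

end MayaSet

-- Positions of the beads and of the gaps in the Maya diagram (abacus) of `f`.
def bead (f : ℕ → ℕ) (k : ℕ) : ℤ := f k - k - 1

noncomputable def gap (f : ℕ → ℕ) (j : ℕ) : ℤ := j - conj f j

namespace IsPartition

variable {f : ℕ → ℕ} (hf : IsPartition f)
include hf

lemma lt_conj_iff (k j : ℕ) : k < conj f j ↔ j < f k := by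
  have hlow : IsLowerSet {i | j < f i} := fun _ _ hle hn => lt_of_lt_of_le hn (hf.1 hle)
  obtain ⟨N, hN⟩ := eventually_atTop.mp hf.2
  have hfin : {i | j < f i}.Finite := by
    refine (finite_Iio N).subset fun i hi => mem_Iio.mpr ?_
    by_contra! h
    simp only [mem_ofPred_eq, hN i h] at hi
    omega
  exact (hlow.mem_iff_lt_natCard hfin k).symm

lemma lt_durfee_iff (i : ℕ) : i < durfee f ↔ i < f i := by
  have hlow : IsLowerSet {i | i < f i} :=
    fun _ _ hle hn => lt_of_le_of_lt hle (lt_of_lt_of_le hn (hf.1 hle))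
  have hfin : {i | i < f i}.Finite := by
    refine (Set.finite_lt_nat (conj f 0)).subset fun k hk => ?_
    exact (hf.lt_conj_iff k 0).mpr (by simp only [mem_ofPred_eq] at hk; omega)
  exact (hlow.mem_iff_lt_natCard hfin i).symm

lemma bead_ne_gap (k j : ℕ) : bead f k ≠ gap f j := by
  have := hf.lt_conj_iff k j
  unfold bead gap
  omega

lemma lt_iff_gap_lt_bead (i j : ℕ) : j < f i ↔ gap f j < bead f i := by
  have := hf.lt_conj_iff i j
  unfold bead gap
  omega

lemma hook_eq_bead_sub_gap {i j : ℕ} (h : j < f i) :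
    (hook f i j : ℤ) = bead f i - gap f j := by
  have := (hf.lt_conj_iff i j).mpr h
  unfold hook bead gap
  omega

lemma conj_eq_of_forall_lt_iff {j n : ℕ} (h : ∀ k, j < f k ↔ k < n) : conj f j = n :=
  eq_of_forall_lt_iff fun k => (hf.lt_conj_iff k j).trans (h k)

lemma mem_range_bead_or_gap (x : ℤ) : x ∈ range (bead f) ∨ x ∈ range (gap f) := by
  obtain ⟨N, hN⟩ := eventually_atTop.mp hf.2
  have hlow : IsLowerSet {k | x < bead f k} := fun m n hle hn => by
    have := hf.1 hle
    simp only [mem_ofPred_eq, bead] at *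
    omega
  have hfin : {k | x < bead f k}.Finite := by
    refine (finite_Iio (max N (-x).toNat)).subset fun k hk => mem_Iio.mpr ?_
    by_contra! h
    have h1 := hN k (le_of_max_le_left h)
    have h2 := le_of_max_le_right h
    simp only [mem_ofPred_eq, bead, h1] at hk
    omega
  -- `n` counts the beads above `x`; if `x` is not the bead of index `n`, it is the gap of
  -- index `x + n`.
  set n := Nat.card {k | x < bead f k}
  have above : ∀ k, x < bead f k ↔ k < n := hlow.mem_iff_lt_natCard hfin
  rcases (not_lt.mp ((above n).not.mpr (lt_irrefl n))).eq_or_lt with heq | hlt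
  · exact Or.inl ⟨n, heq⟩
  · have hx : 0 ≤ x + n := by unfold bead at hlt; omega
    refine Or.inr ⟨(x + n).toNat, ?_⟩
    suffices conj f (x + n).toNat = n by unfold gap; omega
    refine hf.conj_eq_of_forall_lt_iff fun k => ?_
    rcases lt_or_ge k n with hk | hk
    · have h1 := (above (n - 1)).mpr (by omega)
      have h2 := hf.1 (show k ≤ n - 1 by omega)
      unfold bead at h1
      simp only [hk, iff_true]
      omega
    · have := hf.1 hk
      unfold bead at hlt
      simp only [not_lt.mpr hk, iff_false]
      omega

lemma range_gap_eq_compl : range (gap f) = (range (bead f))ᶜ := by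
  ext x
  refine ⟨?_, (hf.mem_range_bead_or_gap x).resolve_left⟩
  rintro ⟨j, rfl⟩ ⟨k, hk⟩
  exact hf.bead_ne_gap k j hk

lemma isTCore_iff_forall_sub_mem {t : ℕ} (ht : 0 < t) :
    IsTCore t f ↔ ∀ x ∈ range (bead f), x - t ∈ range (bead f) := by
  rw [IsTCore, and_iff_right hf]
  constructor
  · rintro hcore _ ⟨i, rfl⟩
    by_contra hnot
    rw [← mem_compl_iff, ← hf.range_gap_eq_compl] at hnot
    obtain ⟨j, hj⟩ := hnot
    have hbox : j < f i := (hf.lt_iff_gap_lt_bead i j).mpr (by omega)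
    refine hcore i j hbox ⟨1, ?_⟩
    have := hf.hook_eq_bead_sub_gap hbox
    omega
  · rintro hcl i j hbox ⟨m, hm⟩
    obtain ⟨k, hk⟩ := sub_nsmul_mem_of_forall_sub_mem hcl (mem_range_self i) m
    have := hf.hook_eq_bead_sub_gap hbox
    rw [hm, nsmul_eq_mul] at *
    push_cast at this
    exact hf.bead_ne_gap k j (by rw [hk]; linarith)

lemma natCast_mem_range_bead_iff (n : ℕ) :
    (n : ℤ) ∈ range (bead f) ↔ n ∈ frobA f '' Iio (durfee f) := by
  constructor
  · rintro ⟨k, hk⟩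
    have hkd : k < durfee f := by rw [hf.lt_durfee_iff]; unfold bead at hk; omega
    refine ⟨k, hkd, ?_⟩
    unfold bead at hk
    unfold frobA
    omega
  · rintro ⟨i, hi, rfl⟩
    have := (hf.lt_durfee_iff i).mp hi
    refine ⟨i, ?_⟩
    unfold bead frobA
    omega

lemma negSucc_mem_range_gap_iff (n : ℕ) :
    Int.negSucc n ∈ range (gap f) ↔ n ∈ frobB f '' Iio (durfee f) := by
  constructor
  · rintro ⟨j, hj⟩
    have hjd : j < durfee f := by
      rw [hf.lt_durfee_iff, ← hf.lt_conj_iff]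
      rw [Int.negSucc_eq] at hj; unfold gap at hj; omega
    refine ⟨j, hjd, ?_⟩
    rw [Int.negSucc_eq] at hj; unfold gap at hj; unfold frobB
    omega
  · rintro ⟨j, hj, rfl⟩
    have := (hf.lt_conj_iff j j).mpr ((hf.lt_durfee_iff j).mp hj)
    refine ⟨j, ?_⟩
    rw [Int.negSucc_eq]; unfold gap frobB
    omega

lemma range_bead_eq_mayaSet :
    range (bead f) = mayaSet (frobA f '' Iio (durfee f)) (frobB f '' Iio (durfee f)) := by
  ext (n | n)
  · rw [Int.ofNat_eq_natCast, natCast_mem_mayaSet, hf.natCast_mem_range_bead_iff]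
  · rw [negSucc_mem_mayaSet, ← hf.negSucc_mem_range_gap_iff, hf.range_gap_eq_compl,
      mem_compl_iff, not_not]

end IsPartition

/-- Kolitsch's characterization: `λ` is a `t`-core iff in its `t`-colored Frobenius
partition (top entries `q_i = a_i / t` with color `r_i = a_i % t`, bottom entries
`q'_j = b_j / t` with color `r'_j = t - 1 - b_j % t`) no color appears in both rows,
and whenever a value appears with some color in a row, all smaller values with the same
color appear in that row. -/
theorem stmt19 (t : ℕ) (ht : 0 < t) (f : ℕ → ℕ) (hf : IsPartition f) :
    IsTCore t f ↔
      ((∀ i j, i < durfee f → j < durfee f →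
          frobA f i % t ≠ t - 1 - frobB f j % t) ∧
       (∀ i c, i < durfee f → c < frobA f i / t →
          ∃ k, k < durfee f ∧ frobA f k / t = c ∧ frobA f k % t = frobA f i % t) ∧
       (∀ j c, j < durfee f → c < frobB f j / t →
          ∃ k, k < durfee f ∧ frobB f k / t = c ∧ frobB f k % t = frobB f j % t)) := by
  rw [hf.isTCore_iff_forall_sub_mem ht, hf.range_bead_eq_mayaSet, forall_sub_mem_mayaSet_iff ht,
    ← forall_lt_div_exists_iff ht, ← forall_lt_div_exists_iff ht]
  simp only [forall_mem_image, exists_mem_image, mem_Iio]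
  tauto
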